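/- Let U ∈ ℝ^{d×d} be symmetric positive definite, t ∈ ℝ^d and s > 0. Then the reformulated log-likelihood evaluated at the block matrix S(U,t,s) equals L̂(S(U,t,s)) = n/2 − (nd/2) log(2π) − (n/2) log s − (n/2) log det U − ½ Σ_{i=1}^n (xᵢ − t)ᵀ U^{−1} (xᵢ − t) − n/(2s). -/

import Mathlib

open Matrix Real

noncomputable def pN {d : ℕ} (x μ : Fin d → ℝ) (C : Matrix (Fin d) (Fin d) ℝ) : ℝ :=
  C.det ^ (-(1:ℝ)/2) * (2 * Real.pi) ^ (-(d:ℝ)/2) *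
    Real.exp (-(1/2) * ((x - μ) ⬝ᵥ (C⁻¹ *ᵥ (x - μ))))

noncomputable def qN {d : ℕ} (y : Fin (d+1) → ℝ) (S : Matrix (Fin (d+1)) (Fin (d+1)) ℝ) : ℝ :=
  (2 * Real.pi * Real.exp 1) ^ ((1:ℝ)/2) * S.det ^ (-(1:ℝ)/2) *
    (2 * Real.pi) ^ (-((d:ℝ)+1)/2) * Real.exp (-(1/2) * (y ⬝ᵥ (S⁻¹ *ᵥ y)))

def liftPt {d : ℕ} (x : Fin d → ℝ) : Fin (d+1) → ℝ := Fin.snoc x 1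

noncomputable def Lgauss {d n : ℕ} (x : Fin n → Fin d → ℝ) (μ : Fin d → ℝ)
    (C : Matrix (Fin d) (Fin d) ℝ) : ℝ := ∑ i, Real.log (pN (x i) μ C)

noncomputable def Lhat {d n : ℕ} (x : Fin n → Fin d → ℝ)
    (S : Matrix (Fin (d+1)) (Fin (d+1)) ℝ) : ℝ := ∑ i, Real.log (qN (liftPt (x i)) S)

def Sblk {d : ℕ} (U : Matrix (Fin d) (Fin d) ℝ) (t : Fin d → ℝ) (s : ℝ) :
    Matrix (Fin (d+1)) (Fin (d+1)) ℝ :=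
  Matrix.of (Fin.snoc
    (fun i : Fin d => Fin.snoc (fun j : Fin d => U i j + s * t i * t j) (s * t i))
    (Fin.snoc (fun j : Fin d => s * t j) s))

/-!
With `P = [[1, t], [0, 1]]` one has `S(U,t,s) = P · diag(U, s) · Pᵀ`. Since `det P = 1`,
`det S(U,t,s) = s · det U`, and since `P⁻¹ (x, 1) = (x - t, 1)`, the quadratic form of
`S(U,t,s)⁻¹` at `(x, 1)` is `(x - t)ᵀ U⁻¹ (x - t) + 1/s`. Substituting both into `log q_N`
and summing over the data points gives the formula.
-/

namespace Matrix

variable {R m o : Type*} [CommRing R] [Fintype m] [Fintype o]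

theorem dotProduct_mulVec_reindex {n : Type*} [Fintype n] (e : m ≃ n) (M : Matrix m m R)
    (y : n → R) : y ⬝ᵥ (reindex e e M *ᵥ y) = (y ∘ e) ⬝ᵥ (M *ᵥ (y ∘ e)) := by
  rw [reindex_apply, submatrix_mulVec_equiv, dotProduct_comp_equiv_symm, Equiv.symm_symm]

variable [DecidableEq m] [DecidableEq o]

theorem fromBlocks_add_mul_mul_transpose_eq (U : Matrix m m R) (T : Matrix m o R)
    (D : Matrix o o R) :
    fromBlocks (U + T * D * Tᵀ) (T * D) (D * Tᵀ) D
      = fromBlocks 1 T 0 1 * fromBlocks U 0 0 D * (fromBlocks 1 T 0 1)ᵀ := by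
  simp [fromBlocks_transpose, fromBlocks_multiply, Matrix.mul_assoc]

theorem det_fromBlocks_add_mul_mul_transpose (U : Matrix m m R) (T : Matrix m o R)
    (D : Matrix o o R) :
    (fromBlocks (U + T * D * Tᵀ) (T * D) (D * Tᵀ) D).det = U.det * D.det := by
  rw [fromBlocks_add_mul_mul_transpose_eq, det_mul, det_mul, det_transpose,
    det_fromBlocks_zero₂₁, det_fromBlocks_zero₂₁]
  simp

theorem mulVec_dotProduct_inv_mul_mul_transpose {n : Type*} [Fintype n] [DecidableEq n]
    {P : Matrix n n R} (hP : IsUnit P.det) (B : Matrix n n R) (w : n → R) :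
    (P *ᵥ w) ⬝ᵥ ((P * B * Pᵀ)⁻¹ *ᵥ (P *ᵥ w)) = w ⬝ᵥ (B⁻¹ *ᵥ w) := by
  have hPinv : P⁻¹ *ᵥ (P *ᵥ w) = w := by rw [mulVec_mulVec, nonsing_inv_mul _ hP, one_mulVec]
  rw [mul_inv_rev, mul_inv_rev, ← mulVec_mulVec, ← mulVec_mulVec, hPinv, dotProduct_mulVec,
    ← mulVec_transpose, transpose_nonsing_inv, transpose_transpose, hPinv]

theorem sumElim_dotProduct_inv_fromBlocks_add_mul_mul_transpose {U : Matrix m m R}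
    {D : Matrix o o R} (hU : IsUnit U.det) (hD : IsUnit D.det) (T : Matrix m o R)
    (x : m → R) (z : o → R) :
    Sum.elim x z ⬝ᵥ ((fromBlocks (U + T * D * Tᵀ) (T * D) (D * Tᵀ) D)⁻¹ *ᵥ Sum.elim x z)
      = (x - T *ᵥ z) ⬝ᵥ (U⁻¹ *ᵥ (x - T *ᵥ z)) + z ⬝ᵥ (D⁻¹ *ᵥ z) := by
  have hP : IsUnit (fromBlocks 1 T 0 1 : Matrix (m ⊕ o) (m ⊕ o) R).det := by simp
  have hxz : fromBlocks 1 T 0 1 *ᵥ Sum.elim (x - T *ᵥ z) z = Sum.elim x z := by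
    simp [fromBlocks_mulVec]
  have hUD : IsUnit U ↔ IsUnit D := by simp [isUnit_iff_isUnit_det, hU, hD]
  rw [fromBlocks_add_mul_mul_transpose_eq, ← hxz, mulVec_dotProduct_inv_mul_mul_transpose hP,
    inv_fromBlocks_zero₂₁_of_isUnit_iff _ _ _ hUD]
  simp [fromBlocks_mulVec, sumElim_dotProduct_sumElim]

end Matrix

section Sblk

variable {d : ℕ} (U : Matrix (Fin d) (Fin d) ℝ) (t : Fin d → ℝ) (s : ℝ)

theorem Sblk_eq_reindex :
    Sblk U t s = reindex finSumFinEquiv finSumFinEquiv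
      (fromBlocks (U + replicateCol (Fin 1) t * !![s] * (replicateCol (Fin 1) t)ᵀ)
        (replicateCol (Fin 1) t * !![s]) (!![s] * (replicateCol (Fin 1) t)ᵀ) !![s]) := by
  ext i j
  induction i using Fin.lastCases <;> induction j using Fin.lastCases <;>
    simp [Sblk, mul_apply, vecMul, dotProduct, mul_comm]

theorem det_Sblk : (Sblk U t s).det = U.det * s := by
  rw [Sblk_eq_reindex, det_reindex_self, det_fromBlocks_add_mul_mul_transpose]
  simp

theorem liftPt_comp_finSumFinEquiv (w : Fin d → ℝ) :
    liftPt w ∘ finSumFinEquiv = Sum.elim w 1 := by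
  ext (i | i)
  · exact Fin.snoc_castSucc (α := fun _ => ℝ) _ _ _
  · obtain rfl := Fin.eq_zero i
    exact Fin.snoc_last (α := fun _ => ℝ) _ _

theorem liftPt_dotProduct_inv_Sblk_mulVec (hU : IsUnit U.det) (hs : s ≠ 0) (w : Fin d → ℝ) :
    liftPt w ⬝ᵥ ((Sblk U t s)⁻¹ *ᵥ liftPt w) = (w - t) ⬝ᵥ (U⁻¹ *ᵥ (w - t)) + s⁻¹ := by
  rw [Sblk_eq_reindex, inv_reindex, dotProduct_mulVec_reindex, liftPt_comp_finSumFinEquiv,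
    sumElim_dotProduct_inv_fromBlocks_add_mul_mul_transpose hU (by simpa using hs)]
  have ht : replicateCol (Fin 1) t *ᵥ 1 = t := by ext; simp [mulVec, dotProduct]
  simp [ht]

end Sblk

theorem log_qN {d : ℕ} (y : Fin (d + 1) → ℝ) {S : Matrix (Fin (d + 1)) (Fin (d + 1)) ℝ}
    (hS : 0 < S.det) :
    Real.log (qN y S)
      = 1 / 2 - d / 2 * Real.log (2 * π) - 1 / 2 * Real.log S.det
        - 1 / 2 * (y ⬝ᵥ (S⁻¹ *ᵥ y)) := by
  have h2π : 0 < 2 * π := by positivity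
  rw [qN, Real.log_mul (by positivity) (Real.exp_ne_zero _),
    Real.log_mul (by positivity) (by positivity), Real.log_mul (by positivity) (by positivity),
    Real.log_rpow (by positivity), Real.log_rpow hS, Real.log_rpow h2π, Real.log_exp,
    Real.log_mul h2π.ne' (Real.exp_ne_zero 1), Real.log_exp]
  ring

theorem Lhat_at_Sblk_general {d n : ℕ} (x : Fin n → Fin d → ℝ)
    (U : Matrix (Fin d) (Fin d) ℝ) (hU : U.PosDef)
    (t : Fin d → ℝ) (s : ℝ) (hs : 0 < s) :
    Lhat x (Sblk U t s)
      = n/2 - n * d / 2 * Real.log (2 * Real.pi) - n/2 * Real.log s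
        - n/2 * Real.log U.det
        - 1/2 * ∑ i, (x i - t) ⬝ᵥ (U⁻¹ *ᵥ (x i - t)) - n/(2*s) := by
  have hdet : 0 < (Sblk U t s).det := by rw [det_Sblk]; exact mul_pos hU.det_pos hs
  simp only [Lhat, log_qN _ hdet, liftPt_dotProduct_inv_Sblk_mulVec U t s
    hU.det_pos.ne'.isUnit hs.ne', det_Sblk, Real.log_mul hU.det_pos.ne' hs.ne']
  simp only [Finset.sum_sub_distrib, ← Finset.mul_sum, Finset.sum_add_distrib, Finset.sum_const,
    Finset.card_univ, Fintype.card_fin, nsmul_eq_mul]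
  field_simp
  ring

/-- the reformulated log-likelihood evaluated at the block matrix
`S(U,t,s)` in closed form. -/
theorem Lhat_at_Sblk {d n : ℕ} (hd : 1 ≤ d) (x : Fin n → Fin d → ℝ)
    (U : Matrix (Fin d) (Fin d) ℝ) (hU : U.PosDef)
    (t : Fin d → ℝ) (s : ℝ) (hs : 0 < s) :
    Lhat x (Sblk U t s)
      = n/2 - n * d / 2 * Real.log (2 * Real.pi) - n/2 * Real.log s
        - n/2 * Real.log U.det
        - 1/2 * ∑ i, (x i - t) ⬝ᵥ (U⁻¹ *ᵥ (x i - t)) - n/(2*s) :=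
  Lhat_at_Sblk_general x U hU t s hs
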